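/- There exists a function φ : ℝ_{>0} → ℝ_{>0} such that for every c > 0, every n ∈ ℕ with n ≥ 2, every integer i with 1 ≤ i ≤ n − ⌊log^{2.5} n⌋, all integers x, β, β', α, α', every ε ∈ [-1,1] and every set S ⊆ ℤ satisfying: |α|, |α'| ≤ √(c·s_i·log n); |β|, |β'| ≤ 1; S ⊆ [−√(c·ℓ_i·log n), √(c·ℓ_i·log n)]; x ∈ S; |ε| ≤ √(c·log n / s_i); Pr_{x'←B(ℓ_i,ε)}[x' ∈ S] > 0; and E_{x'←B(ℓ_i,ε)}[|x'| given x' ∈ S] ≤ E_{x'←B(ℓ_i,ε)}[|x'|]; it holds that |E_{x'←B(ℓ_i,ε)}[exp((α·x + β·x² + α'·x' + β'·x'²)/s_{i+1}) given x' ∈ S] − 1| ≤ φ(c)·√(log n / ℓ_i)·(1 + |x|/√ℓ_i). -/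

import Mathlib

noncomputable def binPMF (n : ℕ) (ε : ℝ) (k : ℤ) : ℝ :=
  if ((n : ℤ) + k) % 2 = 0 ∧ -(n : ℤ) ≤ k ∧ k ≤ (n : ℤ) then
    (n.choose (((n : ℤ) + k) / 2).toNat : ℝ) *
      ((1 + ε) / 2) ^ (((n : ℤ) + k) / 2).toNat *
      ((1 - ε) / 2) ^ (((n : ℤ) - k) / 2).toNat
  else 0

noncomputable def binTail (n : ℕ) (ε : ℝ) (k : ℤ) : ℝ :=
  ∑ t ∈ Finset.Icc k (n : ℤ), binPMF n ε t

def lRound (m i : ℕ) : ℕ := m + 1 - i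

def sRound (m i : ℕ) : ℕ := ∑ j ∈ Finset.Icc i m, lRound m j

/-!
Write `u(x')` for the exponent and `K = 8 √(c log n) / ℓ_i`. Since `s_i ≤ ℓ_i²`,
`s_{i+1} ≥ ℓ_i² / 4` and `x, x' ∈ S` are `O(√(c ℓ_i log n))`, we get `|u(x')| ≤ K (|x| + |x'|)`,
and `log² n ≤ ℓ_i` makes this at most `16 c`; hence `|e^u - 1| ≤ e^{16c} K (|x| + |x'|)`.
Averaging over `x' ∈ S` and using the hypothesis on the conditional mean of `|x'|` leaves
`E|x'| ≤ √ℓ_i + ℓ_i |ε| ≤ (1 + √(2c)) √ℓ_i`, by Cauchy–Schwarz from the binomial variance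
`ℓ_i (1 - ε²)` (a Bernstein polynomial identity) and the bound on `ε`.
-/

open Finset Polynomial

lemma abs_exp_sub_one_le_abs_mul_exp_abs (u : ℝ) : |Real.exp u - 1| ≤ |u| * Real.exp |u| := by
  rcases le_or_gt 0 u with hu | hu
  · rw [abs_of_nonneg hu, abs_of_nonneg (by simpa using Real.one_le_exp hu)]
    have h1 : 1 - u ≤ Real.exp (-u) := by linarith [Real.add_one_le_exp (-u)]
    have h2 : Real.exp (-u) * Real.exp u = 1 := by rw [← Real.exp_add, neg_add_cancel, Real.exp_zero]
    nlinarith [mul_le_mul_of_nonneg_right h1 (Real.exp_pos u).le]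
  · rw [abs_of_neg hu, abs_of_nonpos (by simpa using Real.exp_le_one_iff.mpr hu.le)]
    nlinarith [Real.add_one_le_exp u, Real.one_le_exp (neg_nonneg.mpr hu.le)]

lemma abs_mul_add_mul_sq_le {a b X A M : ℝ} (ha : |a| ≤ A) (hb : |b| ≤ 1) (hX : |X| ≤ M) :
    |a * X + b * X ^ 2| ≤ (A + M) * |X| := by
  have h1 : |a * X| ≤ A * |X| := by
    rw [abs_mul]; exact mul_le_mul_of_nonneg_right ha (abs_nonneg X)
  have h2 : |b * X ^ 2| ≤ M * |X| := by
    rw [abs_mul, abs_pow, sq]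
    nlinarith [abs_nonneg b, abs_nonneg X, mul_nonneg (abs_nonneg X) (abs_nonneg X)]
  linarith [abs_add_le (a * X) (b * X ^ 2)]

lemma abs_exp_quadratic_sub_one_le {a a' b b' X Z A M s K t : ℝ}
    (ha : |a| ≤ A) (ha' : |a'| ≤ A) (hb : |b| ≤ 1) (hb' : |b'| ≤ 1) (hX : |X| ≤ M) (hZ : |Z| ≤ M)
    (hs : 0 < s) (hK : (A + M) / s ≤ K) (ht : 2 * (K * M) ≤ t) :
    |Real.exp ((a * X + b * X ^ 2 + a' * Z + b' * Z ^ 2) / s) - 1| ≤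
      Real.exp t * K * |X| + Real.exp t * K * |Z| := by
  set u := (a * X + b * X ^ 2 + a' * Z + b' * Z ^ 2) / s
  have hAM : 0 ≤ A + M := by linarith [(abs_nonneg a).trans ha, (abs_nonneg X).trans hX]
  have hK0 : 0 ≤ K := (div_nonneg hAM hs.le).trans hK
  have hu : |u| ≤ K * (|X| + |Z|) := by
    have hnum : |a * X + b * X ^ 2 + a' * Z + b' * Z ^ 2| ≤ (A + M) * |X| + (A + M) * |Z| := by
      rw [add_assoc (a * X + b * X ^ 2)]
      exact (abs_add_le _ _).trans
        (add_le_add (abs_mul_add_mul_sq_le ha hb hX) (abs_mul_add_mul_sq_le ha' hb' hZ))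
    calc |u| ≤ (A + M) / s * (|X| + |Z|) := by
          rw [abs_div, abs_of_pos hs, div_mul_eq_mul_div, mul_add]
          exact div_le_div_of_nonneg_right hnum hs.le
      _ ≤ K * (|X| + |Z|) := by gcongr
  have hut : |u| ≤ t := hu.trans (by nlinarith)
  calc |Real.exp u - 1| ≤ |u| * Real.exp |u| := abs_exp_sub_one_le_abs_mul_exp_abs u
    _ ≤ K * (|X| + |Z|) * Real.exp t := by gcongr
    _ = _ := by ring

lemma sqrt_add_sqrt_div_le {c ℓ L s s' : ℝ} (hc : 0 ≤ c) (hℓ : 0 ≤ ℓ) (hL : 1 ≤ L)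
    (hs : s ≤ L ^ 2) (hs' : L ^ 2 ≤ 4 * s') :
    (√(c * s * ℓ) + √(c * L * ℓ)) / s' ≤ 8 * √(c * ℓ) / L := by
  have hsqrt : ∀ y ≤ L ^ 2, √(c * y * ℓ) ≤ √(c * ℓ) * L := fun y hy => by
    rw [← Real.sqrt_sq (by linarith : 0 ≤ L), ← Real.sqrt_mul (by positivity)]
    exact Real.sqrt_le_sqrt (by nlinarith [mul_nonneg hc hℓ])
  have hs'0 : 0 < s' := by nlinarith
  rw [div_le_div_iff₀ hs'0 (by linarith)]
  nlinarith [hsqrt s hs, hsqrt L (by nlinarith), Real.sqrt_nonneg (c * ℓ)]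

lemma div_mul_sqrt_le {c ℓ L : ℝ} (hc : 0 ≤ c) (hℓ : 0 ≤ ℓ) (hL : 0 < L) (hℓL : ℓ ^ 2 ≤ L) :
    8 * √(c * ℓ) / L * √(c * L * ℓ) ≤ 8 * c := by
  have hℓ' : ℓ ≤ √L := Real.le_sqrt_of_sq_le hℓL
  have hprod : √(c * ℓ) * √(c * L * ℓ) = c * ℓ * √L := by
    rw [← Real.sqrt_mul (by positivity), show c * ℓ * (c * L * ℓ) = (c * ℓ) ^ 2 * L by ring,
      Real.sqrt_mul (by positivity), Real.sqrt_sq (by positivity)]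
  rw [div_mul_eq_mul_div, mul_assoc, hprod, div_le_iff₀ hL]
  have : ℓ * √L ≤ L := by
    calc ℓ * √L ≤ √L * √L := by gcongr
      _ = L := Real.mul_self_sqrt hL.le
  nlinarith

lemma mul_abs_le_sqrt_mul_sqrt {c ℓ L s ε : ℝ} (hc : 0 ≤ c) (hℓ : 0 ≤ ℓ) (hs : 0 < s)
    (hLs : L ^ 2 ≤ 2 * s) (hℓL : ℓ ≤ L) (hε : |ε| ≤ √(c * ℓ / s)) :
    L * |ε| ≤ √(2 * c) * √L := by
  have hε2 : ε ^ 2 * s ≤ c * ℓ := by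
    rw [← le_div_iff₀ hs, ← sq_abs, ← Real.sq_sqrt (by positivity : 0 ≤ c * ℓ / s)]
    exact pow_le_pow_left₀ (abs_nonneg ε) hε 2
  rw [← Real.sqrt_mul (by positivity)]
  apply Real.le_sqrt_of_sq_le
  rw [mul_pow, sq_abs]
  nlinarith [sq_nonneg ε]

section CondMean

variable {ι : Type*} (T : Finset ι) (S : Set ι) (w : ι → ℝ)

/-- `E[f(x') | x' ∈ S]` for `x'` drawn from `T` with weights `w`. -/
noncomputable def condMean (f : ι → ℝ) : ℝ :=
  (∑ z ∈ T, S.indicator (fun z => w z * f z) z) / ∑ z ∈ T, S.indicator w z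

variable {T S w}

lemma abs_condMean_sub_one_le {f h : ι → ℝ} {a b : ℝ} (hw : ∀ z ∈ S, 0 ≤ w z)
    (hW : 0 < ∑ z ∈ T, S.indicator w z) (hf : ∀ z ∈ S, |f z - 1| ≤ a + b * h z) :
    |condMean T S w f - 1| ≤ a + b * condMean T S w h := by
  have hdiff : condMean T S w f - 1 =
      (∑ z ∈ T, S.indicator w z * (f z - 1)) / ∑ z ∈ T, S.indicator w z := by
    simp only [condMean, Set.indicator_mul_left, mul_sub, mul_one, sum_sub_distrib]
    field_simp
  have hbound : ∀ z, |S.indicator w z * (f z - 1)| ≤ S.indicator w z * (a + b * h z) := by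
    intro z
    by_cases hz : z ∈ S
    · rw [Set.indicator_of_mem hz, abs_mul, abs_of_nonneg (hw z hz)]
      exact mul_le_mul_of_nonneg_left (hf z hz) (hw z hz)
    · simp [Set.indicator_of_notMem hz]
  rw [hdiff, abs_div, abs_of_pos hW, div_le_iff₀ hW]
  calc _ ≤ ∑ z ∈ T, S.indicator w z * (a + b * h z) :=
        (abs_sum_le_sum_abs _ _).trans (sum_le_sum fun z _ => hbound z)
    _ = _ := by
      simp only [condMean, Set.indicator_mul_left, mul_add, sum_add_distrib, ← sum_mul,
        mul_left_comm _ b, ← mul_sum]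
      field_simp

end CondMean

lemma binPMF_nonneg {ε : ℝ} (hε : ε ∈ Set.Icc (-1 : ℝ) 1) (L : ℕ) (k : ℤ) :
    0 ≤ binPMF L ε k := by
  obtain ⟨h1, h2⟩ := hε
  unfold binPMF
  split_ifs
  · have : 0 ≤ (1 + ε) / 2 := by linarith
    have : 0 ≤ (1 - ε) / 2 := by linarith
    positivity
  · exact le_rfl

lemma sum_binPMF_mul_eq_sum_bernstein (L : ℕ) (ε : ℝ) (g : ℤ → ℝ) :
    ∑ k ∈ Icc (-(L : ℤ)) L, binPMF L ε k * g k =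
      ∑ j ∈ range (L + 1), (bernsteinPolynomial ℝ L j).eval ((1 + ε) / 2) * g (2 * j - L) := by
  classical
  rw [← sum_filter_of_ne (p := fun k => ((L : ℤ) + k) % 2 = 0 ∧ -(L : ℤ) ≤ k ∧ k ≤ L)
    fun k _ hk => by_contra fun hc => hk (by rw [binPMF, if_neg hc, zero_mul])]
  refine sum_nbij' (fun k => (((L : ℤ) + k) / 2).toNat) (fun j => 2 * (j : ℤ) - L)
    ?_ ?_ ?_ ?_ ?_ <;> intro k hk <;> simp only [mem_filter, mem_Icc, mem_range] at hk ⊢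
  · omega
  · omega
  · omega
  · omega
  · have hsub : L - (((L : ℤ) + k) / 2).toNat = (((L : ℤ) - k) / 2).toNat := by omega
    have hk' : 2 * ((((L : ℤ) + k) / 2).toNat : ℤ) - L = k := by omega
    simp only [binPMF, if_pos hk.2, bernsteinPolynomial, eval_mul, eval_pow, eval_natCast, eval_X,
      eval_sub, eval_one, hsub, hk']
    ring_nf

lemma sum_binPMF (L : ℕ) (ε : ℝ) : ∑ k ∈ Icc (-(L : ℤ)) L, binPMF L ε k = 1 := by
  simpa [← eval_finsetSum, bernsteinPolynomial.sum] using sum_binPMF_mul_eq_sum_bernstein L ε 1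

lemma sum_binPMF_mul_sq_sub (L : ℕ) (ε : ℝ) :
    ∑ k ∈ Icc (-(L : ℤ)) L, binPMF L ε k * ((k : ℝ) - L * ε) ^ 2 = L * (1 - ε ^ 2) := by
  have h := congrArg (eval ((1 + ε) / 2)) (bernsteinPolynomial.variance (R := ℝ) L)
  simp only [eval_finsetSum, eval_mul, eval_pow, eval_sub, eval_X, eval_natCast,
    eval_one, nsmul_eq_mul] at h
  rw [sum_binPMF_mul_eq_sum_bernstein]
  calc _ = 4 * ∑ j ∈ range (L + 1), (L * ((1 + ε) / 2) - j) ^ 2 *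
        (bernsteinPolynomial ℝ L j).eval ((1 + ε) / 2) := by
        rw [mul_sum]; refine sum_congr rfl fun j _ => ?_; push_cast; ring
    _ = L * (1 - ε ^ 2) := by rw [h]; ring

lemma sum_binPMF_mul_abs_le {ε : ℝ} (hε : ε ∈ Set.Icc (-1 : ℝ) 1) (L : ℕ) :
    ∑ k ∈ Icc (-(L : ℤ)) L, binPMF L ε k * |(k : ℝ)| ≤ √(L : ℝ) + L * |ε| := by
  have hw := binPMF_nonneg hε L
  have hdev : ∑ k ∈ Icc (-(L : ℤ)) L, binPMF L ε k * |(k : ℝ) - L * ε| ≤ √(L : ℝ) := by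
    have hCS := sum_sq_le_sum_mul_sum_of_sq_le_mul (Icc (-(L : ℤ)) L)
      (r := fun k => binPMF L ε k * |(k : ℝ) - L * ε|)
      (g := fun k => binPMF L ε k * ((k : ℝ) - L * ε) ^ 2) (fun k _ => hw k)
      (fun k _ => mul_nonneg (hw k) (sq_nonneg _))
      (fun k _ => le_of_eq (by rw [mul_pow, sq_abs]; ring))
    rw [sum_binPMF, one_mul, sum_binPMF_mul_sq_sub] at hCS
    calc _ ≤ √((L : ℝ) * (1 - ε ^ 2)) := (le_abs_self _).trans (Real.abs_le_sqrt hCS)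
      _ ≤ √(L : ℝ) := Real.sqrt_le_sqrt (by nlinarith [sq_nonneg ε])
  calc _ ≤ ∑ k ∈ Icc (-(L : ℤ)) L,
        (binPMF L ε k * |(k : ℝ) - L * ε| + binPMF L ε k * (L * |ε|)) := by
        refine sum_le_sum fun k _ => ?_
        rw [← mul_add]
        refine mul_le_mul_of_nonneg_left ?_ (hw k)
        calc |(k : ℝ)| ≤ |(k : ℝ) - L * ε| + |L * ε| := by
              simpa only [sub_add_cancel] using abs_add_le ((k : ℝ) - L * ε) (L * ε)
          _ = _ := by rw [abs_mul, Nat.abs_cast]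
    _ ≤ √(L : ℝ) + L * |ε| := by
        rw [sum_add_distrib, ← sum_mul, sum_binPMF, one_mul]
        exact add_le_add_left hdev _

lemma two_mul_sRound (m i : ℕ) : 2 * sRound m i = lRound m i * (lRound m i + 1) := by
  have hsum : sRound m i = ∑ k ∈ range (lRound m i + 1), k := by
    rw [sum_range_succ', add_zero]
    refine sum_nbij' (fun j => m - j) (fun k => m - k) ?_ ?_ ?_ ?_ ?_ <;>
      intro j hj <;> simp only [lRound, mem_Icc, mem_range] at hj ⊢ <;> omega
  rw [hsum, mul_comm, sum_range_id_mul_two, Nat.add_sub_cancel, mul_comm]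

lemma lRound_succ (m i : ℕ) : lRound m (i + 1) = lRound m i - 1 := by
  unfold lRound; omega

lemma sRound_le_sq (m i : ℕ) : sRound m i ≤ lRound m i ^ 2 := by
  nlinarith [two_mul_sRound m i]

lemma sq_le_two_mul_sRound (m i : ℕ) : lRound m i ^ 2 ≤ 2 * sRound m i := by
  nlinarith [two_mul_sRound m i]

lemma sq_le_four_mul_sRound_succ {m i : ℕ} (h : 2 ≤ lRound m i) :
    lRound m i ^ 2 ≤ 4 * sRound m (i + 1) := by
  have hs := two_mul_sRound m (i + 1)
  obtain ⟨k, hk⟩ : ∃ k, lRound m i = k + 2 := ⟨_, (Nat.sub_add_cancel h).symm⟩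
  rw [lRound_succ, hk, show k + 2 - 1 = k + 1 by omega] at hs
  rw [hk]
  nlinarith

lemma one_le_logb_two {n : ℕ} (hn : 2 ≤ n) : 1 ≤ Real.logb 2 n := by
  rw [Real.le_logb_iff_rpow_le (by norm_num) (by positivity), Real.rpow_one]
  exact_mod_cast hn

lemma logb_sq_lt_lRound {n i : ℕ} (hn : 2 ≤ n)
    (hi : (i : ℝ) ≤ n - (⌊Real.logb 2 n ^ ((5 : ℝ) / 2)⌋₊ : ℝ)) :
    Real.logb 2 n ^ 2 < lRound n i := by
  have hℓ := one_le_logb_two hn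
  have hpow : Real.logb 2 n ^ 2 ≤ Real.logb 2 n ^ ((5 : ℝ) / 2) := by
    rw [← Real.rpow_natCast]
    exact Real.rpow_le_rpow_of_exponent_le hℓ (by norm_num)
  have hfloor := Nat.lt_floor_add_one (Real.logb 2 n ^ ((5 : ℝ) / 2))
  have hin : i ≤ n + 1 := by
    have : (i : ℝ) ≤ n := hi.trans (by simp)
    have : i ≤ n := by exact_mod_cast this
    omega
  rw [lRound, Nat.cast_sub hin]
  push_cast
  linarith

lemma two_le_lRound {n i : ℕ} (hn : 2 ≤ n)
    (hi : (i : ℝ) ≤ n - (⌊Real.logb 2 n ^ ((5 : ℝ) / 2)⌋₊ : ℝ)) : 2 ≤ lRound n i := by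
  have hL := logb_sq_lt_lRound hn hi
  have hfloor : 1 ≤ ⌊Real.logb 2 n ^ ((5 : ℝ) / 2)⌋₊ :=
    Nat.le_floor (by simpa using Real.one_le_rpow (one_le_logb_two hn) (by norm_num))
  have : (i : ℝ) + 1 ≤ n := by
    have : (1 : ℝ) ≤ ⌊Real.logb 2 n ^ ((5 : ℝ) / 2)⌋₊ := by exact_mod_cast hfloor
    linarith
  have : i + 1 ≤ n := by exact_mod_cast this
  unfold lRound; omega

theorem stmt_11 :
    ∃ φ : ℝ → ℝ, (∀ c : ℝ, 0 < c → 0 < φ c) ∧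
      ∀ c : ℝ, 0 < c → ∀ n : ℕ, 2 ≤ n → ∀ i : ℕ, 1 ≤ i →
        (i : ℝ) ≤ (n : ℝ) - (⌊Real.logb 2 n ^ ((5 : ℝ) / 2)⌋₊ : ℝ) →
        ∀ x α α' β β' : ℤ, ∀ ε : ℝ, ε ∈ Set.Icc (-1 : ℝ) 1 → ∀ S : Set ℤ,
          |(α : ℝ)| ≤ Real.sqrt (c * (sRound n i : ℝ) * Real.logb 2 n) →
          |(α' : ℝ)| ≤ Real.sqrt (c * (sRound n i : ℝ) * Real.logb 2 n) →
          |β| ≤ 1 → |β'| ≤ 1 →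
          (∀ z ∈ S, |(z : ℝ)| ≤ Real.sqrt (c * (lRound n i : ℝ) * Real.logb 2 n)) →
          x ∈ S →
          |ε| ≤ Real.sqrt (c * Real.logb 2 n / (sRound n i : ℝ)) →
          0 < (∑ z ∈ Finset.Icc (-(lRound n i : ℤ)) (lRound n i : ℤ),
              S.indicator (fun z' => binPMF (lRound n i) ε z') z) →
          (∑ z ∈ Finset.Icc (-(lRound n i : ℤ)) (lRound n i : ℤ),
              S.indicator (fun z' => binPMF (lRound n i) ε z' * |(z' : ℝ)|) z) /
            (∑ z ∈ Finset.Icc (-(lRound n i : ℤ)) (lRound n i : ℤ),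
              S.indicator (fun z' => binPMF (lRound n i) ε z') z) ≤
            (∑ z ∈ Finset.Icc (-(lRound n i : ℤ)) (lRound n i : ℤ),
              binPMF (lRound n i) ε z * |(z : ℝ)|) →
          |(∑ z ∈ Finset.Icc (-(lRound n i : ℤ)) (lRound n i : ℤ),
              S.indicator (fun z' => binPMF (lRound n i) ε z' *
                Real.exp (((α : ℝ) * (x : ℝ) + (β : ℝ) * (x : ℝ) ^ 2 +
                  (α' : ℝ) * (z' : ℝ) + (β' : ℝ) * (z' : ℝ) ^ 2) / (sRound n (i + 1) : ℝ))) z) /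
            (∑ z ∈ Finset.Icc (-(lRound n i : ℤ)) (lRound n i : ℤ),
              S.indicator (fun z' => binPMF (lRound n i) ε z') z) - 1| ≤
            φ c * Real.sqrt (Real.logb 2 n / (lRound n i : ℝ)) *
              (1 + |(x : ℝ)| / Real.sqrt (lRound n i)) := by
  refine ⟨fun c => 8 * √c * (1 + √(2 * c)) * Real.exp (16 * c), fun c hc => by positivity, ?_⟩
  intro c hc n hn i _ hi x α α' β β' ε hε S hα hα' hβ hβ' hS hxS hεb hW hmean
  set ℓ := Real.logb 2 n
  set L := lRound n i
  have hℓ : 0 ≤ ℓ := zero_le_one.trans (one_le_logb_two hn)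
  have hL2 : 2 ≤ L := two_le_lRound hn hi
  have hℓL : ℓ ^ 2 ≤ L := (logb_sq_lt_lRound hn hi).le
  have hL : (2 : ℝ) ≤ L := by exact_mod_cast hL2
  have hs : (sRound n i : ℝ) ≤ L ^ 2 := by exact_mod_cast sRound_le_sq n i
  have hs2 : (L : ℝ) ^ 2 ≤ 2 * sRound n i := by exact_mod_cast sq_le_two_mul_sRound n i
  have hs' : (L : ℝ) ^ 2 ≤ 4 * sRound n (i + 1) := by
    exact_mod_cast sq_le_four_mul_sRound_succ hL2
  have hpt : ∀ z ∈ S, |Real.exp (((α : ℝ) * x + β * (x : ℝ) ^ 2 + α' * z + β' * (z : ℝ) ^ 2) /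
      (sRound n (i + 1) : ℝ)) - 1| ≤ Real.exp (16 * c) * (8 * √(c * ℓ) / L) * |(x : ℝ)| +
        Real.exp (16 * c) * (8 * √(c * ℓ) / L) * |(z : ℝ)| := fun z hz =>
    abs_exp_quadratic_sub_one_le hα hα' (by exact_mod_cast hβ) (by exact_mod_cast hβ')
      (hS x hxS) (hS z hz) (by nlinarith) (sqrt_add_sqrt_div_le hc.le hℓ (by linarith) hs hs')
      (by linarith [div_mul_sqrt_le hc.le hℓ (by linarith) hℓL])
  have hmeanZ : condMean (Icc (-(L : ℤ)) L) S (binPMF L ε) (fun z => |(z : ℝ)|) ≤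
      (1 + √(2 * c)) * √(L : ℝ) := by
    refine hmean.trans ((sum_binPMF_mul_abs_le hε L).trans ?_)
    linarith [mul_abs_le_sqrt_mul_sqrt hc.le hℓ (by nlinarith) hs2 (by nlinarith) hεb]
  calc _ ≤ Real.exp (16 * c) * (8 * √(c * ℓ) / L) * |(x : ℝ)| +
        Real.exp (16 * c) * (8 * √(c * ℓ) / L) *
          condMean (Icc (-(L : ℤ)) L) S (binPMF L ε) (fun z => |(z : ℝ)|) :=
        abs_condMean_sub_one_le (fun z _ => binPMF_nonneg hε L z) hW hpt
    _ ≤ Real.exp (16 * c) * (8 * √(c * ℓ) / L) * |(x : ℝ)| +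
        Real.exp (16 * c) * (8 * √(c * ℓ) / L) * ((1 + √(2 * c)) * √(L : ℝ)) := by gcongr
    _ ≤ _ := by
        have hLq : (L : ℝ) = √(L : ℝ) ^ 2 := (Real.sq_sqrt (by linarith)).symm
        rw [Real.sqrt_mul hc.le, Real.sqrt_div hℓ]
        field_simp
        rw [← hLq]
        nlinarith [mul_nonneg (mul_nonneg (Real.sqrt_nonneg ℓ) (by linarith : (0 : ℝ) ≤ L))
          (mul_nonneg (Real.sqrt_nonneg (c * 2)) (abs_nonneg (x : ℝ)))]
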